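/- arXiv:2405.03576 — 3 statements merged into one kernel-verified Lean document; each statement's English description precedes it below -/
import Mathlib

section
/- Let M be a matroid on a finite ground set E, let B ⊆ E and let x ≠ y be elements of E \ B such that both B ∪ {x} and B ∪ {y} are bases of M. Let a : E → ℝ satisfy a(x) = min{ a(c) : c ∈ C(x, B ∪ {y}), c ≠ x } and a(y) = min{ a(c) : c ∈ C(y, B ∪ {x}), c ≠ y }, where C(e, B') denotes the fundamental circuit of e with respect to the basis B'. Then y belongs to C(x, B ∪ {y}), x belongs to C(y, B ∪ {x}), and a(x) = a(y). -/
open Set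

/-- A circuit of a matroid: a minimal dependent set. -/
def MatroidCircuit {α : Type*} (M : Matroid α) (C : Set α) : Prop :=
  M.Dep C ∧ ∀ D ⊆ C, M.Dep D → D = C

/-- The fundamental circuit of `e` with respect to a basis `B`: the unique circuit
contained in `B ∪ {e}` (expressed as an intersection, which equals that circuit by
uniqueness). -/
def fundCircuit {α : Type*} (M : Matroid α) (B : Set α) (e : α) : Set α :=
  ⋂₀ {C | MatroidCircuit M C ∧ e ∈ C ∧ C ⊆ insert e B}

lemma MatroidCircuit.diff_singleton_indep {α : Type*} {M : Matroid α} {C : Set α}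
    (hC : MatroidCircuit M C) {e : α} (he : e ∈ C) : M.Indep (C \ {e}) := by
  by_contra h
  have hdep : M.Dep (C \ {e}) :=
    Matroid.dep_of_not_indep h (diff_subset.trans hC.1.subset_ground)
  have heq := hC.2 _ diff_subset hdep
  have hni : e ∉ C \ {e} := by simp
  rw [heq] at hni
  exact hni he

lemma MatroidCircuit.mem_closure_diff {α : Type*} {M : Matroid α} {C : Set α}
    (hC : MatroidCircuit M C) {e : α} (he : e ∈ C) : e ∈ M.closure (C \ {e}) := by
  have hind := hC.diff_singleton_indep he
  have hdep : M.Dep (insert e (C \ {e})) := by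
    rw [insert_diff_singleton, insert_eq_self.2 he]
    exact hC.1
  exact (hind.insert_dep_iff.1 hdep).1

/-- If two circuits live in `insert e I` with `I` independent, one is contained
in the other. -/
lemma circuit_subset_circuit {α : Type*} {M : Matroid α} {I C₁ C₂ : Set α} {e : α}
    (hI : M.Indep I) (hC₁ : MatroidCircuit M C₁) (hC₂ : MatroidCircuit M C₂)
    (h₁ : C₁ ⊆ insert e I) (h₂ : C₂ ⊆ insert e I)
    (he₁ : e ∈ C₁) (he₂ : e ∈ C₂) : C₁ ⊆ C₂ := by
  intro f hf
  by_contra hfC₂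
  have hfe : f ≠ e := fun h => hfC₂ (h ▸ he₂)
  have hJI : (C₁ ∪ C₂) \ {e} ⊆ I := by
    intro c hc
    exact ((hc.1.elim (fun h => h₁ h) (fun h => h₂ h)).resolve_left hc.2)
  have hJind : M.Indep ((C₁ ∪ C₂) \ {e}) := hI.subset hJI
  have hfJ : f ∈ (C₁ ∪ C₂) \ {e} := ⟨Or.inl hf, hfe⟩
  have heJf : e ∈ M.closure (((C₁ ∪ C₂) \ {e}) \ {f}) := by
    refine M.closure_subset_closure ?_ (hC₂.mem_closure_diff he₂)
    intro c hc
    exact ⟨⟨Or.inr hc.1, hc.2⟩, fun h => hfC₂ (h ▸ hc.1)⟩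
  have hinsf : insert f ((C₁ \ {e}) \ {f}) = C₁ \ {e} := by
    rw [insert_diff_singleton, insert_eq_self.2 (show f ∈ C₁ \ {e} from ⟨hf, hfe⟩)]
  have hinse : insert e ((C₁ \ {e}) \ {f}) = C₁ \ {f} := by
    rw [diff_diff_comm, insert_diff_singleton,
      insert_eq_self.2 (show e ∈ C₁ \ {f} from ⟨he₁, fun h => hfe h.symm⟩)]
  have heX : e ∉ M.closure ((C₁ \ {e}) \ {f}) := by
    intro heX
    have hXind : M.Indep ((C₁ \ {e}) \ {f}) :=
      (hC₁.diff_singleton_indep he₁).subset diff_subset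
    have hdep : M.Dep (insert e ((C₁ \ {e}) \ {f})) :=
      hXind.insert_dep_iff.2 ⟨heX, by simp⟩
    have heq := hC₁.2 _ (hinse ▸ diff_subset) hdep
    rw [hinse] at heq
    have hni : f ∉ C₁ \ {f} := by simp
    rw [heq] at hni
    exact hni hf
  have hex : f ∈ M.closure (insert e ((C₁ \ {e}) \ {f})) \
      M.closure ((C₁ \ {e}) \ {f}) := by
    refine Matroid.closure_exchange ⟨?_, heX⟩
    rw [hinsf]
    exact hC₁.mem_closure_diff he₁
  have hss : insert e ((C₁ \ {e}) \ {f}) ⊆ insert e (((C₁ ∪ C₂) \ {e}) \ {f}) :=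
    insert_subset_insert (fun c hc => ⟨⟨Or.inl hc.1.1, hc.1.2⟩, hc.2⟩)
  have h1 : f ∈ M.closure (insert e (((C₁ ∪ C₂) \ {e}) \ {f})) :=
    M.closure_subset_closure hss hex.1
  rw [Matroid.closure_insert_eq_of_mem_closure heJf] at h1
  exact hJind.notMem_closure_sdiff_of_mem hfJ h1

/-- Uniqueness of the circuit contained in `insert e I` for `I` independent. -/
lemma circuit_unique {α : Type*} {M : Matroid α} {I C₁ C₂ : Set α} {e : α}
    (hI : M.Indep I) (hC₁ : MatroidCircuit M C₁) (hC₂ : MatroidCircuit M C₂)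
    (h₁ : C₁ ⊆ insert e I) (h₂ : C₂ ⊆ insert e I) : C₁ = C₂ := by
  have mem_e : ∀ C, MatroidCircuit M C → C ⊆ insert e I → e ∈ C := by
    intro C hC hCI
    by_contra he
    have : C ⊆ I := fun c hc => ((hCI hc).resolve_left (fun h => he (h ▸ hc)))
    exact (hI.subset this).not_dep hC.1
  have he₁ := mem_e _ hC₁ h₁
  have he₂ := mem_e _ hC₂ h₂
  exact subset_antisymm (circuit_subset_circuit hI hC₁ hC₂ h₁ h₂ he₁ he₂)
    (circuit_subset_circuit hI hC₂ hC₁ h₂ h₁ he₂ he₁)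

/-- Existence of a circuit inside a dependent set (finite ground type). -/
lemma exists_circuit_subset {α : Type*} [Fintype α] {M : Matroid α} {D : Set α}
    (hD : M.Dep D) : ∃ C, MatroidCircuit M C ∧ C ⊆ D := by
  have : WellFoundedLT (Set α) := Finite.to_wellFoundedLT
  obtain ⟨C, ⟨hCdep, hCD⟩, hmin⟩ :=
    (wellFounded_lt (α := Set α)).has_min {C | M.Dep C ∧ C ⊆ D} ⟨D, hD, subset_rfl⟩
  refine ⟨C, ⟨hCdep, ?_⟩, hCD⟩
  intro D' hD'C hD'dep
  have hle : D' ≤ C := hD'C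
  have := hmin D' ⟨hD'dep, hD'C.trans hCD⟩
  exact hle.lt_or_eq.resolve_left this

/-- if `B ∪ {x}` and `B ∪ {y}` are bases (`x ≠ y`, `x, y ∉ B`) and
`a x = min { a c : c ∈ C(x, B ∪ {y}), c ≠ x }`,
`a y = min { a c : c ∈ C(y, B ∪ {x}), c ≠ y }`, then `y ∈ C(x, B ∪ {y})`,
`x ∈ C(y, B ∪ {x})`, and `a x = a y`. -/
theorem adjacent_apartments_agree {α : Type*} [Fintype α] (M : Matroid α)
    (hE : M.E = Set.univ) (B : Set α) (x y : α) (hxy : x ≠ y)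
    (hx : x ∉ B) (hy : y ∉ B)
    (hBx : M.IsBase (insert x B)) (hBy : M.IsBase (insert y B)) (a : α → ℝ)
    (hax : a x = sInf (a '' (fundCircuit M (insert y B) x \ {x})))
    (hay : a y = sInf (a '' (fundCircuit M (insert x B) y \ {y}))) :
    y ∈ fundCircuit M (insert y B) x ∧ x ∈ fundCircuit M (insert x B) y ∧
      a x = a y := by
  set S : Set α := insert x (insert y B) with hS
  have hSE : S ⊆ M.E := by rw [hE]; exact subset_univ _
  have hS' : insert y (insert x B) = S := by rw [hS, insert_comm]
  have hssub : insert x B ⊂ S := by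
    constructor
    · intro c hc
      rcases hc with h | h
      · exact Or.inl h
      · exact Or.inr (Or.inr h)
    · intro h
      have : y ∈ insert x B := h (Or.inr (Or.inl rfl))
      rcases this with h | h
      · exact hxy h.symm
      · exact hy h
  have hSdep : M.Dep S := hBx.dep_of_ssubset hssub hSE
  obtain ⟨C₀, hC₀, hC₀S⟩ := exists_circuit_subset hSdep
  have hxC₀ : x ∈ C₀ := by
    by_contra hxn
    have : C₀ ⊆ insert y B := fun c hc =>
      ((hC₀S hc).resolve_left (fun h => hxn (h ▸ hc)))
    exact (hBy.indep.subset this).not_dep hC₀.1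
  have hyC₀ : y ∈ C₀ := by
    by_contra hyn
    have : C₀ ⊆ insert x B := by
      intro c hc
      rcases hC₀S hc with h | h | h
      · exact Or.inl h
      · exact absurd (h ▸ hc) hyn
      · exact Or.inr h
    exact (hBx.indep.subset this).not_dep hC₀.1
  -- both fundamental circuits equal C₀
  have hfund1 : fundCircuit M (insert y B) x = C₀ := by
    apply subset_antisymm
    · exact sInter_subset_of_mem ⟨hC₀, hxC₀, hC₀S⟩
    · intro c hc C hC
      obtain ⟨hCc, _, hCS⟩ := hC
      rw [← circuit_unique hBy.indep hC₀ hCc hC₀S hCS]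
      exact hc
  have hfund2 : fundCircuit M (insert x B) y = C₀ := by
    apply subset_antisymm
    · exact sInter_subset_of_mem ⟨hC₀, hyC₀, by rw [hS']; exact hC₀S⟩
    · intro c hc C hC
      obtain ⟨hCc, _, hCS⟩ := hC
      rw [hS'] at hCS
      rw [← circuit_unique hBy.indep hC₀ hCc hC₀S hCS]
      exact hc
  rw [hfund1] at hax ⊢
  rw [hfund2] at hay ⊢
  refine ⟨hyC₀, hxC₀, ?_⟩
  have hbdd1 : BddBelow (a '' (C₀ \ {x})) := (Set.toFinite _).bddBelow
  have hbdd2 : BddBelow (a '' (C₀ \ {y})) := (Set.toFinite _).bddBelow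
  have h1 : a x ≤ a y := by
    rw [hax]
    exact csInf_le hbdd1 ⟨y, ⟨hyC₀, fun h => hxy (mem_singleton_iff.1 h).symm⟩, rfl⟩
  have h2 : a y ≤ a x := by
    rw [hay]
    exact csInf_le hbdd2 ⟨x, ⟨hxC₀, fun h => hxy (mem_singleton_iff.1 h)⟩, rfl⟩
  linarith
end

section
/- Let V be the Vámos matroid, and let F = {f1, f2} and H = {h1, h2} (both are rank-2 flats of V). Then for every matroid N of rank 4 and every injective map φ from the ground set of V into the ground set of N such that, for all subsets S of the ground set of V, S is independent in V if and only if φ(S) is independent in N (i.e., for every extension φ : V → N), the flats F_N = cl_N(φ(F)) and H_N = cl_N(φ(H)) do not form a modular pair: rk(F_N) + rk(H_N) ≠ rk(cl_N(F_N ∪ H_N)) + rk(F_N ∩ H_N). -/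
open Set

/-- The rank of a set in a matroid: the supremum of the cardinalities of independent
subsets. -/
noncomputable def mrk {α : Type*} (M : Matroid α) (X : Set α) : ℕ :=
  sSup {n | ∃ I, M.Indep I ∧ I ⊆ X ∧ I.ncard = n}

/-- The five circuits of size 4 of the Vámos matroid, on the ground set `Fin 8`
labelled `h1 = 0, h2 = 1, f1 = 2, f2 = 3, p = 4, q = 5, e = 6, g = 7`:
`{h1,h2,f1,f2}, {h1,h2,e,p}, {f1,f2,e,p}, {h1,h2,g,q}, {f1,f2,g,q}`. -/
def vamosDependent4 : Set (Set (Fin 8)) :=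
  {{0, 1, 2, 3}, {0, 1, 6, 4}, {2, 3, 6, 4}, {0, 1, 7, 5}, {2, 3, 7, 5}}

section Aux

variable {β : Type*} {N : Matroid β}

lemma Vamos.indep_card (hrank4 : ∀ B, N.IsBase B → B.Finite ∧ B.ncard = 4) {I : Set β}
    (hI : N.Indep I) : I.Finite ∧ I.ncard ≤ 4 := by
  obtain ⟨B, hB, hIB⟩ := hI.exists_isBase_superset
  obtain ⟨hBfin, hBcard⟩ := hrank4 B hB
  exact ⟨hBfin.subset hIB, hBcard ▸ Set.ncard_le_ncard hIB hBfin⟩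

lemma Vamos.mrk_nonempty (X : Set β) :
    {n | ∃ I, N.Indep I ∧ I ⊆ X ∧ I.ncard = n}.Nonempty :=
  ⟨0, ∅, N.empty_indep, empty_subset _, Set.ncard_empty _⟩

lemma Vamos.mrk_bdd (hrank4 : ∀ B, N.IsBase B → B.Finite ∧ B.ncard = 4) (X : Set β) :
    BddAbove {n | ∃ I, N.Indep I ∧ I ⊆ X ∧ I.ncard = n} := by
  refine ⟨4, ?_⟩
  rintro n ⟨I, hI, -, rfl⟩
  exact (Vamos.indep_card hrank4 hI).2

lemma Vamos.le_mrk (hrank4 : ∀ B, N.IsBase B → B.Finite ∧ B.ncard = 4) {I X : Set β}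
    (hI : N.Indep I) (hIX : I ⊆ X) : I.ncard ≤ mrk N X :=
  le_csSup (Vamos.mrk_bdd hrank4 X) ⟨I, hI, hIX, rfl⟩

lemma Vamos.mrk_le_of {X : Set β} {n : ℕ}
    (h : ∀ I, N.Indep I → I ⊆ X → I.ncard ≤ n) : mrk N X ≤ n := by
  refine csSup_le (Vamos.mrk_nonempty X) ?_
  rintro m ⟨I, hI, hIX, rfl⟩
  exact h I hI hIX

lemma Vamos.mrk_exists {N : Matroid β} (hrank4 : ∀ B, N.IsBase B → B.Finite ∧ B.ncard = 4) (X : Set β) :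
    ∃ I, N.Indep I ∧ I ⊆ X ∧ I.ncard = mrk N X :=
  Nat.sSup_mem (Vamos.mrk_nonempty X) (Vamos.mrk_bdd hrank4 X)

lemma Vamos.mrk_mono (hrank4 : ∀ B, N.IsBase B → B.Finite ∧ B.ncard = 4) {X Y : Set β}
    (h : X ⊆ Y) : mrk N X ≤ mrk N Y :=
  Vamos.mrk_le_of fun I hI hIX => Vamos.le_mrk hrank4 hI (hIX.trans h)

lemma Vamos.mrk_basis' (hrank4 : ∀ B, N.IsBase B → B.Finite ∧ B.ncard = 4) {I X : Set β}
    (hI : N.IsBasis' I X) : mrk N X = I.ncard := by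
  refine le_antisymm (Vamos.mrk_le_of fun J hJ hJX => ?_)
    (Vamos.le_mrk hrank4 hI.indep hI.subset)
  obtain ⟨J', hJ', hJJ'⟩ := hJ.subset_isBasis'_of_subset hJX
  have he : J'.encard = I.encard := hJ'.encard_eq_encard hI
  have hJ'fin := (Vamos.indep_card hrank4 hJ'.indep).1
  calc J.ncard ≤ J'.ncard := Set.ncard_le_ncard hJJ' hJ'fin
    _ = I.ncard := by rw [Set.ncard_def, Set.ncard_def, he]

lemma Vamos.mrk_closure_eq (hrank4 : ∀ B, N.IsBase B → B.Finite ∧ B.ncard = 4) (X : Set β) :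
    mrk N (N.closure X) = mrk N X := by
  obtain ⟨I, hI⟩ := N.exists_isBasis' X
  rw [Vamos.mrk_basis' hrank4 hI, Vamos.mrk_basis' hrank4 hI.isBasis_closure_right.isBasis']

lemma Vamos.mrk_submod (hrank4 : ∀ B, N.IsBase B → B.Finite ∧ B.ncard = 4) (X Y : Set β) :
    mrk N (X ∪ Y) + mrk N (X ∩ Y) ≤ mrk N X + mrk N Y := by
  obtain ⟨I, hI⟩ := N.exists_isBasis' (X ∩ Y)
  obtain ⟨J, hJ, hIJ⟩ := hI.indep.subset_isBasis'_of_subset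
    (hI.subset.trans (Set.inter_subset_left.trans Set.subset_union_left))
  have hJfin := (Vamos.indep_card hrank4 hJ.indep).1
  have h1 : mrk N X + mrk N Y ≥ (J ∩ X).ncard + (J ∩ Y).ncard :=
    add_le_add
      (Vamos.le_mrk hrank4 (hJ.indep.subset Set.inter_subset_left) Set.inter_subset_right)
      (Vamos.le_mrk hrank4 (hJ.indep.subset Set.inter_subset_left) Set.inter_subset_right)
  have h2 : (J ∩ X) ∪ (J ∩ Y) = J := by
    rw [← Set.inter_union_distrib_left]
    exact Set.inter_eq_left.2 hJ.subset
  have h3 : (J ∩ X) ∩ (J ∩ Y) = J ∩ (X ∩ Y) := by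
    ext a; simp; tauto
  have h4 : (J ∩ X).ncard + (J ∩ Y).ncard = J.ncard + (J ∩ (X ∩ Y)).ncard := by
    rw [← h3, ← Set.ncard_union_add_ncard_inter _ _ (hJfin.inter_of_left X)
      (hJfin.inter_of_left Y), h2]
  have h5 : I ⊆ J ∩ (X ∩ Y) := Set.subset_inter hIJ hI.subset
  have h6 : mrk N (X ∩ Y) ≤ (J ∩ (X ∩ Y)).ncard := by
    rw [Vamos.mrk_basis' hrank4 hI]
    exact Set.ncard_le_ncard h5 (hJfin.inter_of_left _)
  have h7 : mrk N (X ∪ Y) = J.ncard := Vamos.mrk_basis' hrank4 hJ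
  omega

lemma Vamos.mrk_indep (hrank4 : ∀ B, N.IsBase B → B.Finite ∧ B.ncard = 4) {I : Set β}
    (hI : N.Indep I) : mrk N I = I.ncard :=
  Vamos.mrk_basis' hrank4 hI.isBasis_self.isBasis'

lemma Vamos.mrk_dep4_le3 {X : Set β}
    (hX : ¬ N.Indep X) (hfin : X.Finite) (hcard : X.ncard = 4) : mrk N X ≤ 3 := by
  refine Vamos.mrk_le_of fun I hI hIX => ?_
  by_contra h
  push_neg at h
  have h4 : X.ncard ≤ I.ncard := by omega
  have := Set.eq_of_subset_of_ncard_le hIX h4 hfin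
  exact hX (this ▸ hI)

/-- If `x` lies in two "planes" of rank at most 3 whose union has rank at least 4, and
`L` is an independent 2-set in both planes, then `x ∈ cl L`. -/
lemma Vamos.mem_line (hrank4 : ∀ B, N.IsBase B → B.Finite ∧ B.ncard = 4)
    {x : β} {L P1 P2 : Set β}
    (hP1 : mrk N P1 ≤ 3) (hP2 : mrk N P2 ≤ 3) (hU : 4 ≤ mrk N (P1 ∪ P2))
    (hL : N.Indep L) (hLfin : L.Finite) (hLcard : L.ncard = 2) (hLP : L ⊆ P1 ∩ P2)
    (hx : x ∈ P1 ∩ P2) (hxE : x ∈ N.E) : x ∈ N.closure L := by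
  have hint : mrk N (P1 ∩ P2) ≤ 2 := by
    have := Vamos.mrk_submod hrank4 P1 P2; omega
  by_contra hxL
  have hxnL : x ∉ L := fun h => hxL (N.subset_closure L hL.subset_ground h)
  have hins : N.Indep (insert x L) := by
    rw [hL.insert_indep_iff_of_notMem hxnL]
    exact ⟨hxE, hxL⟩
  have hle : (insert x L).ncard ≤ 2 :=
    le_trans (Vamos.le_mrk hrank4 hins (insert_subset hx hLP)) hint
  rw [Set.ncard_insert_of_notMem hxnL hLfin] at hle
  omega

lemma Vamos.coe4 (a b c d : Fin 8) :
    ({a,b,c,d} : Set (Fin 8)) = ↑({a,b,c,d} : Finset (Fin 8)) := by simp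

lemma Vamos.mem_vd4 (s : Finset (Fin 8)) :
    (↑s : Set (Fin 8)) ∈ vamosDependent4 ↔
      s ∈ ({{0,1,2,3},{0,1,6,4},{2,3,6,4},{0,1,7,5},{2,3,7,5}} : Finset (Finset (Fin 8))) := by
  simp only [vamosDependent4, Set.mem_insert_iff, Set.mem_singleton_iff, Vamos.coe4,
    Finset.coe_inj, Finset.mem_insert, Finset.mem_singleton]

end Aux

/-- let `V` be the Vámos matroid (a matroid on `Fin 8` whose
independent sets are exactly the sets of at most 4 elements other than the five
distinguished 4-element sets), and let `F = {f1, f2}`, `H = {h1, h2}`. Then for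
every rank-4 matroid `N` and every extension `φ : V → N`, the flats
`F_N = cl_N(φ(F))` and `H_N = cl_N(φ(H))` do not form a modular pair. -/
theorem vamos_flats_never_modular_pair {β : Type*}
    (V : Matroid (Fin 8)) (hVE : V.E = Set.univ)
    (hVindep : ∀ S : Set (Fin 8), V.Indep S ↔ (S.ncard ≤ 4 ∧ S ∉ vamosDependent4))
    (N : Matroid β) (hrank4 : ∀ B, N.IsBase B → B.Finite ∧ B.ncard = 4)
    (φ : Fin 8 → β) (hφ : Function.Injective φ)
    (hext : ∀ S : Set (Fin 8), V.Indep S ↔ N.Indep (φ '' S)) :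
    mrk N (N.closure (φ '' {2, 3})) + mrk N (N.closure (φ '' {0, 1})) ≠
      mrk N (N.closure (N.closure (φ '' {2, 3}) ∪ N.closure (φ '' {0, 1}))) +
        mrk N (N.closure (φ '' {2, 3}) ∩ N.closure (φ '' {0, 1})) := by
  intro heq
  -- independence of images of finsets
  have hVi : ∀ s : Finset (Fin 8), s.card ≤ 4 →
      s ∉ ({{0,1,2,3},{0,1,6,4},{2,3,6,4},{0,1,7,5},{2,3,7,5}} : Finset (Finset (Fin 8))) →
      V.Indep (↑s : Set (Fin 8)) := by
    intro s h1 h2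
    rw [hVindep]
    exact ⟨by rw [Set.ncard_coe_finset]; exact h1, fun h => h2 ((Vamos.mem_vd4 s).1 h)⟩
  have hNi : ∀ s : Finset (Fin 8), s.card ≤ 4 →
      s ∉ ({{0,1,2,3},{0,1,6,4},{2,3,6,4},{0,1,7,5},{2,3,7,5}} : Finset (Finset (Fin 8))) →
      N.Indep (φ '' ↑s) := fun s h1 h2 => (hext _).1 (hVi s h1 h2)
  have hNd : ∀ s : Finset (Fin 8),
      (↑s : Set (Fin 8)) ∈ vamosDependent4 → ¬ N.Indep (φ '' ↑s) := by
    intro s hs h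
    have := (hext _).2 h
    rw [hVindep] at this
    exact this.2 hs
  have himcard : ∀ s : Finset (Fin 8), (φ '' ↑s).ncard = s.card := by
    intro s
    rw [Set.ncard_image_of_injective _ hφ, Set.ncard_coe_finset]
  have himfin : ∀ s : Finset (Fin 8), (φ '' ↑s).Finite := fun s => s.finite_toSet.image _
  -- ground membership
  have hkeyE : ∀ i : Fin 8, φ i ∈ N.E := by
    intro i
    have hi : N.Indep (φ '' ↑({i} : Finset (Fin 8))) := by
      refine hNi _ (by simp) ?_
      simp only [Finset.mem_insert, Finset.mem_singleton]
      push_neg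
      refine ⟨?_, ?_, ?_, ?_, ?_⟩ <;>
        (intro h; apply_fun Finset.card at h; simp at h)
    have : φ i ∈ φ '' ↑({i} : Finset (Fin 8)) := ⟨i, by simp, rfl⟩
    exact hi.subset_ground this
  have hSE : ∀ S : Set (Fin 8), φ '' S ⊆ N.E := by
    rintro S b ⟨i, -, rfl⟩; exact hkeyE i
  -- rewrite set literals as finset coercions
  have e23 : ({2,3} : Set (Fin 8)) = ↑({2,3} : Finset (Fin 8)) := by simp
  have e01 : ({0,1} : Set (Fin 8)) = ↑({0,1} : Finset (Fin 8)) := by simp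
  rw [e23, e01] at heq
  set F := N.closure (φ '' ↑({2,3} : Finset (Fin 8))) with hF
  set H := N.closure (φ '' ↑({0,1} : Finset (Fin 8))) with hH
  -- specific independent sets
  have i23 : N.Indep (φ '' ↑({2,3} : Finset (Fin 8))) := hNi _ (by decide) (by decide)
  have i01 : N.Indep (φ '' ↑({0,1} : Finset (Fin 8))) := hNi _ (by decide) (by decide)
  have i012 : N.Indep (φ '' ↑({0,1,2} : Finset (Fin 8))) := hNi _ (by decide) (by decide)
  have i0124 : N.Indep (φ '' ↑({0,1,2,4} : Finset (Fin 8))) := hNi _ (by decide) (by decide)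
  have i0125 : N.Indep (φ '' ↑({0,1,2,5} : Finset (Fin 8))) := hNi _ (by decide) (by decide)
  have i64 : N.Indep (φ '' ↑({6,4} : Finset (Fin 8))) := hNi _ (by decide) (by decide)
  have i75 : N.Indep (φ '' ↑({7,5} : Finset (Fin 8))) := hNi _ (by decide) (by decide)
  have i4567 : N.Indep (φ '' ↑({6,4,7,5} : Finset (Fin 8))) := hNi _ (by decide) (by decide)
  -- dependent 4-sets
  have d0123 : ¬ N.Indep (φ '' ↑({0,1,2,3} : Finset (Fin 8))) :=
    hNd _ (by rw [Vamos.mem_vd4]; decide)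
  have d0164 : ¬ N.Indep (φ '' ↑({0,1,6,4} : Finset (Fin 8))) :=
    hNd _ (by rw [Vamos.mem_vd4]; decide)
  have d2364 : ¬ N.Indep (φ '' ↑({2,3,6,4} : Finset (Fin 8))) :=
    hNd _ (by rw [Vamos.mem_vd4]; decide)
  have d0175 : ¬ N.Indep (φ '' ↑({0,1,7,5} : Finset (Fin 8))) :=
    hNd _ (by rw [Vamos.mem_vd4]; decide)
  have d2375 : ¬ N.Indep (φ '' ↑({2,3,7,5} : Finset (Fin 8))) :=
    hNd _ (by rw [Vamos.mem_vd4]; decide)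
  -- rank of closures of circuits is ≤ 3
  have hcirc3 : ∀ s : Finset (Fin 8), ¬ N.Indep (φ '' ↑s) → s.card = 4 →
      mrk N (N.closure (φ '' ↑s)) ≤ 3 := by
    intro s hdep hcard
    rw [Vamos.mrk_closure_eq hrank4]
    exact Vamos.mrk_dep4_le3 hdep (himfin s) (by rw [himcard]; exact hcard)
  -- image subsets via finset subsets
  have himsub : ∀ s t : Finset (Fin 8), s ⊆ t → φ '' ↑s ⊆ φ '' ↑t :=
    fun s t h => Set.image_mono (Finset.coe_subset.2 h)
  -- mrk F = 2, mrk H = 2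
  have hrF : mrk N F = 2 := by
    rw [hF, Vamos.mrk_closure_eq hrank4, Vamos.mrk_indep hrank4 i23, himcard]; decide
  have hrH : mrk N H = 2 := by
    rw [hH, Vamos.mrk_closure_eq hrank4, Vamos.mrk_indep hrank4 i01, himcard]; decide
  -- mrk (closure (F ∪ H)) = 3
  have hrFH : mrk N (N.closure (F ∪ H)) = 3 := by
    rw [Vamos.mrk_closure_eq hrank4]
    refine le_antisymm ?_ ?_
    · have h1 : F ∪ H ⊆ N.closure (φ '' ↑({0,1,2,3} : Finset (Fin 8))) := by
        refine Set.union_subset ?_ ?_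
        · exact N.closure_subset_closure (himsub _ _ (by decide))
        · exact N.closure_subset_closure (himsub _ _ (by decide))
      refine le_trans (Vamos.mrk_mono hrank4 h1) ?_
      exact hcirc3 _ d0123 (by decide)
    · have h2 : φ '' ↑({0,1,2} : Finset (Fin 8)) ⊆ F ∪ H := by
        rintro b ⟨i, hi, rfl⟩
        simp only [Finset.coe_insert, Finset.coe_singleton, Set.mem_insert_iff,
          Set.mem_singleton_iff] at hi
        rcases hi with rfl | rfl | rfl
        · exact Or.inr (N.subset_closure _ (hSE _) ⟨0, by simp, rfl⟩)
        · exact Or.inr (N.subset_closure _ (hSE _) ⟨1, by simp, rfl⟩)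
        · exact Or.inl (N.subset_closure _ (hSE _) ⟨2, by simp, rfl⟩)
      have := Vamos.le_mrk hrank4 i012 h2
      rw [himcard] at this
      exact le_trans (by decide) this
  -- from the modular pair equation, mrk (F ∩ H) = 1, get a point x
  have hrInt : mrk N (F ∩ H) = 1 := by omega
  obtain ⟨I, hI, hIsub, hIcard⟩ := Vamos.mrk_exists hrank4 (F ∩ H)
  rw [hrInt] at hIcard
  obtain ⟨x, rfl⟩ := Set.ncard_eq_one.1 hIcard
  have hxF : x ∈ F := (hIsub (Set.mem_singleton x)).1
  have hxH : x ∈ H := (hIsub (Set.mem_singleton x)).2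
  have hxE : x ∈ N.E := N.closure_subset_ground _ hxF
  -- x lies on the line cl(φ''{6,4})
  have hxL1 : x ∈ N.closure (φ '' ↑({6,4} : Finset (Fin 8))) := by
    refine Vamos.mem_line hrank4 (P1 := N.closure (φ '' ↑({0,1,6,4} : Finset (Fin 8))))
      (P2 := N.closure (φ '' ↑({2,3,6,4} : Finset (Fin 8))))
      (hcirc3 _ d0164 (by decide)) (hcirc3 _ d2364 (by decide)) ?_
      i64 (himfin _) (by rw [himcard]; decide) ?_ ⟨?_, ?_⟩ hxE
    · -- union has rank ≥ 4: contains φ''{0,1,2,4}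
      have h2 : φ '' ↑({0,1,2,4} : Finset (Fin 8)) ⊆
          N.closure (φ '' ↑({0,1,6,4} : Finset (Fin 8))) ∪
          N.closure (φ '' ↑({2,3,6,4} : Finset (Fin 8))) := by
        rintro b ⟨i, hi, rfl⟩
        simp only [Finset.coe_insert, Finset.coe_singleton, Set.mem_insert_iff,
          Set.mem_singleton_iff] at hi
        rcases hi with rfl | rfl | rfl | rfl
        · exact Or.inl (N.subset_closure _ (hSE _) ⟨0, by simp, rfl⟩)
        · exact Or.inl (N.subset_closure _ (hSE _) ⟨1, by simp, rfl⟩)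
        · exact Or.inr (N.subset_closure _ (hSE _) ⟨2, by simp, rfl⟩)
        · exact Or.inl (N.subset_closure _ (hSE _) ⟨4, by simp, rfl⟩)
      have := Vamos.le_mrk hrank4 i0124 h2
      rw [himcard] at this
      exact le_trans (by decide) this
    · refine Set.subset_inter ?_ ?_
      · exact (himsub _ _ (by decide)).trans (N.subset_closure _ (hSE _))
      · exact (himsub _ _ (by decide)).trans (N.subset_closure _ (hSE _))
    · exact N.closure_subset_closure (himsub _ _ (by decide)) hxH
    · exact N.closure_subset_closure (himsub _ _ (by decide)) hxF
  -- x lies on the line cl(φ''{7,5})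
  have hxL2 : x ∈ N.closure (φ '' ↑({7,5} : Finset (Fin 8))) := by
    refine Vamos.mem_line hrank4 (P1 := N.closure (φ '' ↑({0,1,7,5} : Finset (Fin 8))))
      (P2 := N.closure (φ '' ↑({2,3,7,5} : Finset (Fin 8))))
      (hcirc3 _ d0175 (by decide)) (hcirc3 _ d2375 (by decide)) ?_
      i75 (himfin _) (by rw [himcard]; decide) ?_ ⟨?_, ?_⟩ hxE
    · have h2 : φ '' ↑({0,1,2,5} : Finset (Fin 8)) ⊆
          N.closure (φ '' ↑({0,1,7,5} : Finset (Fin 8))) ∪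
          N.closure (φ '' ↑({2,3,7,5} : Finset (Fin 8))) := by
        rintro b ⟨i, hi, rfl⟩
        simp only [Finset.coe_insert, Finset.coe_singleton, Set.mem_insert_iff,
          Set.mem_singleton_iff] at hi
        rcases hi with rfl | rfl | rfl | rfl
        · exact Or.inl (N.subset_closure _ (hSE _) ⟨0, by simp, rfl⟩)
        · exact Or.inl (N.subset_closure _ (hSE _) ⟨1, by simp, rfl⟩)
        · exact Or.inr (N.subset_closure _ (hSE _) ⟨2, by simp, rfl⟩)
        · exact Or.inl (N.subset_closure _ (hSE _) ⟨5, by simp, rfl⟩)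
      have := Vamos.le_mrk hrank4 i0125 h2
      rw [himcard] at this
      exact le_trans (by decide) this
    · refine Set.subset_inter ?_ ?_
      · exact (himsub _ _ (by decide)).trans (N.subset_closure _ (hSE _))
      · exact (himsub _ _ (by decide)).trans (N.subset_closure _ (hSE _))
    · exact N.closure_subset_closure (himsub _ _ (by decide)) hxH
    · exact N.closure_subset_closure (himsub _ _ (by decide)) hxF
  -- final contradiction via submodularity on the two lines
  set L1 := N.closure (φ '' ↑({6,4} : Finset (Fin 8))) with hL1
  set L2 := N.closure (φ '' ↑({7,5} : Finset (Fin 8))) with hL2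
  have hrL1 : mrk N L1 = 2 := by
    rw [hL1, Vamos.mrk_closure_eq hrank4, Vamos.mrk_indep hrank4 i64, himcard]; decide
  have hrL2 : mrk N L2 = 2 := by
    rw [hL2, Vamos.mrk_closure_eq hrank4, Vamos.mrk_indep hrank4 i75, himcard]; decide
  have hU4 : 4 ≤ mrk N (L1 ∪ L2) := by
    have h2 : φ '' ↑({6,4,7,5} : Finset (Fin 8)) ⊆ L1 ∪ L2 := by
      rintro b ⟨i, hi, rfl⟩
      simp only [Finset.coe_insert, Finset.coe_singleton, Set.mem_insert_iff,
        Set.mem_singleton_iff] at hi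
      rcases hi with rfl | rfl | rfl | rfl
      · exact Or.inl (N.subset_closure _ (hSE _) ⟨6, by simp, rfl⟩)
      · exact Or.inl (N.subset_closure _ (hSE _) ⟨4, by simp, rfl⟩)
      · exact Or.inr (N.subset_closure _ (hSE _) ⟨7, by simp, rfl⟩)
      · exact Or.inr (N.subset_closure _ (hSE _) ⟨5, by simp, rfl⟩)
    have := Vamos.le_mrk hrank4 i4567 h2
    rw [himcard] at this
    exact le_trans (by decide) this
  have hI1 : 1 ≤ mrk N (L1 ∩ L2) := by
    have : ({x} : Set β).ncard ≤ mrk N (L1 ∩ L2) :=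
      Vamos.le_mrk hrank4 hI (Set.singleton_subset_iff.2 ⟨hxL1, hxL2⟩)
    rwa [Set.ncard_singleton] at this
  have := Vamos.mrk_submod hrank4 L1 L2
  omega
end

section
/- Let M be a finite loopless matroid on ground set E, let v_1, …, v_n ∈ ℝ^d, and let D be a matrix with rows indexed by {1, …, n} and columns indexed by E such that every row D_j : E → ℝ satisfies the tropical circuit condition. For u ∈ ℝ^d set G_u = { e ∈ E : ⟨u, v_j⟩ ≤ D_j(e) for all 1 ≤ j ≤ n }. Then G_u is a flat of M, and for every integer r ≥ 1 and every u ∈ ℝ^d one has (1 if rk_M(G_u) ≥ r, else 0) = ∑_{∅ ≠ B ⊆ J_r} (−1)^{|B|+1} · (1 if cl_M(⋃_{F ∈ B} F) ⊆ G_u, else 0), where J_r denotes the (finite) set of rank-r flats of M. (This is the indicator-function identity I_{D,≥r} = ∑_{∅ ≠ B ⊆ J_r} (−1)^{|B|+1} I_{D, span{∪ F_j : j ∈ B}} for the polyhedra of the parliament of a tropical toric vector bundle.) -/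
open Set

/-- `w` satisfies the tropical circuit condition (i.e. lies in the support of the
Bergman fan of `M`): on every circuit the minimum of `w` is attained by at least two
distinct elements. -/
def TropCircuitCond {α : Type*} (M : Matroid α) (w : α → ℝ) : Prop :=
  ∀ C, MatroidCircuit M C →
    ∃ x ∈ C, ∃ y ∈ C, x ≠ y ∧ w x = w y ∧ ∀ c ∈ C, w x ≤ w c

section Aux
variable {α : Type*} [Fintype α] {M : Matroid α}

lemma flat_of_closure (M : Matroid α) (X : Set α) : M.IsFlat (M.closure X) := by
  rw [Matroid.closure_def, sInter_eq_iInter]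
  have : Nonempty {F // F ∈ {F | M.IsFlat F ∧ X ∩ M.E ⊆ F}} :=
    ⟨⟨M.E, M.ground_isFlat, inter_subset_right⟩⟩
  exact Matroid.IsFlat.iInter (fun F => F.2.1)

open Classical in
lemma exists_matroidCircuit_subset (M : Matroid α) {X : Set α} (hX : M.Dep X) :
    ∃ C ⊆ X, MatroidCircuit M C := by
  classical
  set T : Finset (Finset α) := Finset.univ.filter (fun C => ↑C ⊆ X ∧ M.Dep ↑C) with hT
  have hmem : ∀ C : Finset α, C ∈ T ↔ (↑C ⊆ X ∧ M.Dep ↑C) := by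
    intro C; simp [hT]
  have hne : T.Nonempty := ⟨X.toFinite.toFinset, (hmem _).mpr
    ⟨by rw [Set.Finite.coe_toFinset], by rw [Set.Finite.coe_toFinset]; exact hX⟩⟩
  obtain ⟨C, hC, hminC⟩ := T.exists_min_image Finset.card hne
  obtain ⟨hCX, hCdep⟩ := (hmem C).mp hC
  refine ⟨↑C, hCX, hCdep, fun D hDC hDdep => ?_⟩
  have hDfin : D.Finite := D.toFinite
  have hDF : hDfin.toFinset ⊆ C := by
    rw [Set.Finite.toFinset_subset]; exact hDC
  have hDT : hDfin.toFinset ∈ T := (hmem _).mpr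
    ⟨by rw [Set.Finite.coe_toFinset]; exact hDC.trans hCX,
     by rw [Set.Finite.coe_toFinset]; exact hDdep⟩
  have hcard := hminC _ hDT
  have : hDfin.toFinset = C := Finset.eq_of_subset_of_card_le hDF hcard
  calc D = ↑hDfin.toFinset := by rw [Set.Finite.coe_toFinset]
  _ = ↑C := by rw [this]

lemma trop_no_strict_min (hE : M.E = Set.univ) {w : α → ℝ}
    (hw : TropCircuitCond M w) {S : Set α} {x : α}
    (hx : x ∈ M.closure S) (hlt : ∀ e ∈ S, w x < w e) : False := by
  have hSE : S ⊆ M.E := by rw [hE]; exact subset_univ S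
  obtain ⟨I, hI⟩ := M.exists_isBasis S hSE
  have hxI : x ∉ I := fun h => lt_irrefl _ (hlt x (hI.subset h))
  have hxcl : x ∈ M.closure I := by rw [hI.closure_eq_closure]; exact hx
  have hdep : M.Dep (insert x I) := hI.indep.insert_dep_iff.mpr ⟨hxcl, hxI⟩
  obtain ⟨C, hCsub, hC⟩ := exists_matroidCircuit_subset M hdep
  have hxC : x ∈ C := by
    by_contra hxc
    have hCI : C ⊆ I := fun y hy => ((hCsub hy).resolve_left (fun h => hxc (h ▸ hy)))
    exact (Matroid.dep_iff.mp hC.1).1 (hI.indep.subset hCI)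
  obtain ⟨a, haC, b, hbC, hab, hwab, hmin⟩ := hw C hC
  have : ∃ y ∈ C, y ≠ x ∧ w y ≤ w x := by
    rcases eq_or_ne a x with rfl | ha
    · exact ⟨b, hbC, fun h => hab h.symm, le_of_eq hwab.symm⟩
    · exact ⟨a, haC, ha, hmin x hxC⟩
  obtain ⟨y, hyC, hyx, hyle⟩ := this
  have hyS : y ∈ S := by
    rcases hCsub hyC with h | h
    · exact absurd h hyx
    · exact hI.subset h
  exact absurd (hlt y hyS) (not_lt.mpr hyle)

lemma mrk_set_nonempty (M : Matroid α) (X : Set α) :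
    {n | ∃ I, M.Indep I ∧ I ⊆ X ∧ I.ncard = n}.Nonempty :=
  ⟨0, ∅, M.empty_indep, empty_subset X, Set.ncard_empty α⟩

lemma mrk_set_bdd (M : Matroid α) (X : Set α) :
    BddAbove {n | ∃ I, M.Indep I ∧ I ⊆ X ∧ I.ncard = n} := by
  refine ⟨Nat.card α, fun n hn => ?_⟩
  obtain ⟨I, _, _, rfl⟩ := hn
  calc I.ncard ≤ (Set.univ : Set α).ncard := Set.ncard_le_ncard (subset_univ I) (Set.finite_univ)
  _ = Nat.card α := Set.ncard_univ α

lemma le_mrk_iff {X : Set α} {r : ℕ} :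
    r ≤ mrk M X ↔ ∃ I, M.Indep I ∧ I ⊆ X ∧ I.ncard = r := by
  constructor
  · intro h
    have hm := Nat.sSup_mem (mrk_set_nonempty M X) (mrk_set_bdd M X)
    obtain ⟨I, hI, hIX, hIc⟩ := hm
    obtain ⟨t, htI, htc⟩ := Set.exists_subset_card_eq (hIc.symm ▸ h : r ≤ I.ncard)
    exact ⟨t, hI.subset htI, htI.trans hIX, htc⟩
  · rintro ⟨I, hI, hIX, rfl⟩
    exact le_csSup (mrk_set_bdd M X) ⟨I, hI, hIX, rfl⟩

lemma mrk_mono {X Y : Set α} (h : X ⊆ Y) : mrk M X ≤ mrk M Y :=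
  csSup_le (mrk_set_nonempty M X) (fun n ⟨I, hI, hIX, hc⟩ =>
    le_csSup (mrk_set_bdd M Y) ⟨I, hI, hIX.trans h, hc⟩)

lemma ncard_le_of_indep_subset_closure {I J : Set α} (hI : M.Indep I) (hJ : M.Indep J)
    (hsub : J ⊆ M.closure I) : J.ncard ≤ I.ncard := by
  obtain ⟨J', hJ', hJJ'⟩ := hJ.subset_isBasis_of_subset hsub (M.closure_subset_ground I)
  have h1 : J.encard ≤ J'.encard := Set.encard_le_encard hJJ'
  have h2 : J'.encard = I.encard := hJ'.encard_eq_encard hI.isBasis_closure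
  rw [Set.ncard, Set.ncard]
  exact ENat.toNat_le_toNat (h1.trans_eq h2) I.toFinite.encard_lt_top.ne

lemma mrk_closure_indep {I : Set α} (hI : M.Indep I) : mrk M (M.closure I) = I.ncard := by
  refine le_antisymm ?_ ?_
  · refine csSup_le (mrk_set_nonempty M _) ?_
    rintro n ⟨J, hJ, hJsub, rfl⟩
    exact ncard_le_of_indep_subset_closure hI hJ hJsub
  · exact le_mrk_iff.mpr ⟨I, hI, M.subset_closure I hI.subset_ground, rfl⟩

end Aux

open Classical in
/-- let `D` be a matrix whose rows `D j : E → ℝ` satisfy the tropical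
circuit condition, let `v 1, …, v n ∈ ℝ^d`, and for `u ∈ ℝ^d` let
`G_u = { e : ⟨u, v j⟩ ≤ D j e for all j }`. Then `G_u` is a flat, and for every
`r ≥ 1` the indicator identity
`[rk(G_u) ≥ r] = ∑_{∅ ≠ B ⊆ J_r} (-1)^{|B|+1} [cl(⋃ B) ⊆ G_u]` holds, where `J_r`
is the set of rank-`r` flats. -/
theorem parliament_indicator_identity {α : Type*} [Fintype α] (M : Matroid α)
    (hE : M.E = Set.univ) (hloopless : ∀ e : α, M.Indep {e})
    (d n : ℕ) (v : Fin n → Fin d → ℝ) (D : Fin n → α → ℝ)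
    (hD : ∀ j, TropCircuitCond M (D j)) (u : Fin d → ℝ)
    (Gu : Set α) (hGu : Gu = {e | ∀ j, (∑ k, u k * v j k) ≤ D j e})
    (r : ℕ) (hr : 1 ≤ r) :
    M.IsFlat Gu ∧
      (if r ≤ mrk M Gu then (1 : ℝ) else 0) =
        ∑ B ∈ ((Set.toFinite {F | M.IsFlat F ∧ mrk M F = r}).toFinset.powerset.erase ∅),
          (-1 : ℝ) ^ (B.card + 1) *
            (if M.closure (⋃₀ (B : Set (Set α))) ⊆ Gu then (1 : ℝ) else 0) := by
  classical
  have hGuE : Gu ⊆ M.E := by rw [hE]; exact subset_univ _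
  -- Gu is a flat
  have hclGu : M.closure Gu = Gu := by
    refine subset_antisymm ?_ (M.subset_closure Gu hGuE)
    intro x hx
    by_contra hxGu
    rw [hGu, mem_setOf_eq] at hxGu
    push_neg at hxGu
    obtain ⟨j, hj⟩ := hxGu
    refine trop_no_strict_min hE (hD j) hx (fun e he => ?_)
    rw [hGu, mem_setOf_eq] at he
    exact lt_of_lt_of_le hj (he j)
  have hFlat : M.IsFlat Gu := hclGu ▸ flat_of_closure M Gu
  refine ⟨hFlat, ?_⟩
  set s := (Set.toFinite {F | M.IsFlat F ∧ mrk M F = r}).toFinset with hs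
  have hmem : ∀ F, F ∈ s ↔ M.IsFlat F ∧ mrk M F = r := fun F => Set.Finite.mem_toFinset _
  set ind : Set α → ℝ := fun F => if F ⊆ Gu then 1 else 0 with hind
  -- rewrite each summand as a product
  have hsummand : ∀ B ∈ s.powerset.erase ∅,
      (-1 : ℝ) ^ (B.card + 1) * (if M.closure (⋃₀ (B : Set (Set α))) ⊆ Gu then (1:ℝ) else 0)
      = (-1 : ℝ) ^ (B.card + 1) * ∏ F ∈ B, ind F := by
    intro B _
    congr 1
    have hiff : M.closure (⋃₀ (B : Set (Set α))) ⊆ Gu ↔ ∀ F ∈ B, F ⊆ Gu := by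
      constructor
      · intro h F hF
        refine (subset_sUnion_of_mem (by exact_mod_cast hF)).trans
          ((M.subset_closure _ (by rw [hE]; exact subset_univ _)).trans h)
      · intro h
        have : ⋃₀ (B : Set (Set α)) ⊆ Gu := by
          rintro x ⟨F, hF, hxF⟩
          exact h F (by exact_mod_cast hF) hxF
        exact (M.closure_subset_closure this).trans (le_of_eq hclGu)
    rw [hind]
    simp only [Finset.prod_boole]
    simp only [hiff]
    congr!
  rw [Finset.sum_congr rfl hsummand]
  -- inclusion-exclusion
  have hps : ∑ B ∈ s.powerset, (-1:ℝ)^B.card * ∏ F ∈ B, ind F = ∏ F ∈ s, (1 - ind F) := by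
    have := Finset.prod_add (fun F => -ind F) (fun _ => (1:ℝ)) s
    simp only [Finset.prod_const_one, mul_one] at this
    have h2 : ∀ F, -ind F + 1 = 1 - ind F := fun F => by ring
    simp only [h2] at this
    rw [this]
    refine Finset.sum_congr rfl (fun B _ => ?_)
    rw [show (fun F => -ind F) = fun F => (-1) * ind F from funext (fun F => by ring),
      Finset.prod_mul_distrib, Finset.prod_const]
  have herase : ∑ B ∈ s.powerset.erase ∅, (-1:ℝ)^(B.card+1) * ∏ F ∈ B, ind F
      = 1 - ∏ F ∈ s, (1 - ind F) := by
    have h0 : (∅ : Finset (Set α)) ∈ s.powerset := Finset.empty_mem_powerset s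
    have hsplit := Finset.sum_erase_add s.powerset
      (fun B => (-1:ℝ)^(B.card+1) * ∏ F ∈ B, ind F) h0
    simp only [Finset.card_empty, Finset.prod_empty, pow_one, mul_one, zero_add] at hsplit
    have hflip : ∑ B ∈ s.powerset, (-1:ℝ)^(B.card+1) * ∏ F ∈ B, ind F
        = - ∑ B ∈ s.powerset, (-1:ℝ)^(B.card) * ∏ F ∈ B, ind F := by
      rw [← Finset.sum_neg_distrib]
      exact Finset.sum_congr rfl (fun B _ => by ring)
    linarith [hps, hflip, hsplit]
  rw [herase]
  have hprod : ∏ F ∈ s, (1 - ind F) = if ∀ F ∈ s, ¬(F ⊆ Gu) then (1:ℝ) else 0 := by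
    rw [show (fun F => 1 - ind F) = fun F => if ¬(F ⊆ Gu) then (1:ℝ) else 0 from
      funext (fun F => by rw [hind]; by_cases h : F ⊆ Gu <;> simp [h])]
    simp only [Finset.prod_boole]
    congr!
  rw [hprod]
  -- final equivalence
  have hequiv : (r ≤ mrk M Gu) ↔ ∃ F ∈ s, F ⊆ Gu := by
    constructor
    · intro h
      obtain ⟨I, hI, hIGu, hIc⟩ := le_mrk_iff.mp h
      refine ⟨M.closure I, (hmem _).mpr ⟨flat_of_closure M I, by rw [mrk_closure_indep hI, hIc]⟩, ?_⟩
      exact (M.closure_subset_closure hIGu).trans (le_of_eq hclGu)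
    · rintro ⟨F, hF, hFGu⟩
      obtain ⟨_, hrF⟩ := (hmem F).mp hF
      exact hrF ▸ mrk_mono hFGu
  by_cases h : r ≤ mrk M Gu
  · have : ¬ (∀ F ∈ s, ¬(F ⊆ Gu)) := by
      obtain ⟨F, hF, hFGu⟩ := hequiv.mp h
      exact fun hall => hall F hF hFGu
    rw [if_pos h, if_neg this]; ring
  · have : ∀ F ∈ s, ¬(F ⊆ Gu) := by
      intro F hF hFGu
      exact h (hequiv.mpr ⟨F, hF, hFGu⟩)
    rw [if_neg h, if_pos this]; ring
end
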